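/- Let v̄₁,…,v̄_Λ be positive integers with gcd α, and set v̂_λ = v̄_λ/α. If the realized load vector equals the expected one, V = V̄, then the partition algorithm produces exactly α rounds, each equal to the base vector V̂, and consequently the total delivery time is T(V̄) = α · [∑_{τ∈X_{t+1}} ∏_{i∈τ} v̂_i] / [∑_{τ∈X_t} ∏_{i∈τ} v̂_i]. -/
import Mathlib


/-- Round-`j` load assigned to cache `l` by the partition algorithm (Algorithm 1). -/
def partRound (L : ℕ) (vbar v : Fin L → ℕ) (α : ℕ) (j : ℕ) (l : Fin L) : ℕ :=
  min (v l - (j - 1) * (vbar l / α)) (vbar l / α)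

/-- Number of rounds of the partition algorithm: `β = max_l ⌈α·v_l / v̄_l⌉`. -/
def partRounds (L : ℕ) (vbar v : Fin L → ℕ) (α : ℕ) : ℕ :=
  Finset.univ.sup (fun l : Fin L => (α * v l + vbar l - 1) / vbar l)

/-- If the realized load vector equals the expected one, `V = V̄`, then the
partition algorithm produces exactly `α` rounds, each equal to the base vector
`V̂ = V̄/α`, and the total delivery time equals
`α · [∑_{τ ∈ X_{t+1}} ∏_{i ∈ τ} v̂_i] / [∑_{τ ∈ X_t} ∏_{i ∈ τ} v̂_i]`. -/
theorem stmt8 (L t : ℕ) (ht : 1 ≤ t) (htL : t + 1 ≤ L)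
    (vbar : Fin L → ℕ) (hvbar : ∀ l, 0 < vbar l)
    (α : ℕ) (hα : α = Finset.univ.gcd vbar) (hL : 0 < L) :
    partRounds L vbar vbar α = α
    ∧ (∀ j l, 1 ≤ j → j ≤ α → partRound L vbar vbar α j l = vbar l / α)
    ∧ (∑ _j ∈ Finset.Icc 1 (partRounds L vbar vbar α),
          (∑ τ ∈ (Finset.univ : Finset (Fin L)).powersetCard (t + 1),
              ∏ i ∈ τ, ((vbar i / α : ℕ) : ℚ))
          / (∑ τ ∈ (Finset.univ : Finset (Fin L)).powersetCard t,
              ∏ i ∈ τ, ((vbar i / α : ℕ) : ℚ)))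
      = (α : ℚ) *
          ((∑ τ ∈ (Finset.univ : Finset (Fin L)).powersetCard (t + 1),
              ∏ i ∈ τ, ((vbar i / α : ℕ) : ℚ))
          / (∑ τ ∈ (Finset.univ : Finset (Fin L)).powersetCard t,
              ∏ i ∈ τ, ((vbar i / α : ℕ) : ℚ))) := by
  have hdvd : ∀ l, α ∣ vbar l := fun l => hα ▸ Finset.gcd_dvd (Finset.mem_univ l)
  have l0 : Fin L := ⟨0, hL⟩
  have hαpos : 0 < α := by
    rcases Nat.eq_zero_or_pos α with h | h
    · exfalso
      have := hdvd l0
      rw [h] at this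
      have h0 := Nat.eq_zero_of_zero_dvd this
      exact absurd h0 (Nat.pos_iff_ne_zero.mp (hvbar l0))
    · exact h
  have hrounds : partRounds L vbar vbar α = α := by
    unfold partRounds
    have hfun : (fun l : Fin L => (α * vbar l + vbar l - 1) / vbar l) = fun _ => α := by
      funext l
      have hv := hvbar l
      have h1 : α * vbar l + vbar l - 1 = (vbar l - 1) + α * vbar l := by omega
      rw [h1, Nat.add_mul_div_right _ _ hv, Nat.div_eq_of_lt (by omega)]; omega
    rw [hfun]
    exact Finset.sup_const ⟨l0, Finset.mem_univ l0⟩ α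
  refine ⟨hrounds, ?_, ?_⟩
  · intro j l hj1 hjα
    unfold partRound
    set q := vbar l / α with hq
    have hvl : vbar l = α * q := (Nat.mul_div_cancel' (hdvd l)).symm
    have : q ≤ vbar l - (j - 1) * q := by
      rw [hvl]
      have : (j - 1) * q + q ≤ α * q := by
        have : (j - 1) + 1 ≤ α := by omega
        calc (j - 1) * q + q = ((j - 1) + 1) * q := by ring
          _ ≤ α * q := Nat.mul_le_mul_right q this
      omega
    exact min_eq_right this
  · rw [hrounds, Finset.sum_const, Nat.card_Icc]
    simp [nsmul_eq_mul]
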